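/- Let (a_n)_{n≥1} be a strictly decreasing sequence of positive reals with a_n → 0 and lim_{n→∞} a_{n+1}/a_n = 1. Then there exists a compact set E ⊆ ℝ of positive Lebesgue measure such that (a_n)_{n≥1} cannot be bi-Lipschitz embedded into E, i.e., there is no bi-Lipschitz map f : ℝ → ℝ with f(a_n) ∈ E for all n. -/

import Mathlib

open MeasureTheory Filter

/-! The set is `[0, 1]` with open holes punched around the points `j / nᵢ` of a grid of mesh
`1 / nᵢ` at every level `i`, of radius `2⁻⁽ⁱ⁺⁴⁾ / nᵢ`, so that the holes have total length at
most `1 / 2`. The mesh is chosen so fine that some `Mᵢ` has `a Mᵢ > 2ⁱ / nᵢ` while consecutive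
ratios of `a` are within `4⁻ⁱ` of `1` from `Mᵢ` on.

Let `f` be `L`-bi-Lipschitz with `f (aₘ) ∈ E`, and take `i` with `48 L² < 2ⁱ` and `N ≥ Mᵢ` with
`3 L / nᵢ ≤ a_N < 6 L / nᵢ`. Then `|f (a_N) - f 0| ≥ 3 / nᵢ`, so a hole of level `i` lies between
`f (a_N)` and `f 0 = lim f (aₘ)`, and the points `f (aₘ)`, `m ≥ N`, must jump over it. But their
steps are at most `L 4⁻ⁱ a_N`, which is shorter than the hole. -/

section

open Set Topology

theorem Nat.exists_and_not_succ_of_le {p : ℕ → Prop} {N n : ℕ} (hNn : N ≤ n) (hN : p N)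
    (hn : ¬ p n) : ∃ m ≥ N, p m ∧ ¬ p (m + 1) := by
  induction n, hNn using Nat.le_induction with
  | base => exact absurd hN hn
  | succ n hNn ih =>
    by_cases h : p n
    · exact ⟨n, hNn, h, hn⟩
    · exact ih h

theorem exists_mem_Ico_of_le_two_mul_succ {a : ℕ → ℝ} {t : ℝ} {M : ℕ}
    (ha : Tendsto a atTop (𝓝 0)) (ht : 0 < t) (hM : t ≤ a M)
    (hstep : ∀ m ≥ M, a m ≤ 2 * a (m + 1)) : ∃ N ≥ M, a N ∈ Ico t (2 * t) := by
  obtain ⟨n, hn⟩ := ((ha.eventually (eventually_lt_nhds ht)).and (eventually_ge_atTop M)).exists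
  obtain ⟨N, hNM, hN, hN1⟩ :=
    Nat.exists_and_not_succ_of_le (p := fun m => t ≤ a m) hn.2 hM (not_le.2 hn.1)
  exact ⟨N, hNM, hN, by linarith [hstep N hNM, not_le.1 hN1]⟩

theorem abs_sub_succ_lt_of_ratio {a : ℕ → ℝ} {q : ℝ} {M N m : ℕ}
    (hdec : ∀ m ≥ 1, a (m + 1) < a m) (hq : 0 ≤ q) (hM : 1 ≤ M)
    (hratio : ∀ m ≥ M, (1 - q) * a m < a (m + 1)) (hNM : M ≤ N) (hNm : N ≤ m) :
    |a m - a (m + 1)| < q * a N := by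
  have hanti := antitoneOn_nat_Ici_of_succ_le fun m (hm : m ≥ 1) => (hdec m hm).le
  have hmN : a m ≤ a N := hanti (by simp; omega) (by simp; omega) hNm
  rw [abs_of_pos (sub_pos.2 (hdec m (by omega)))]
  nlinarith [hratio m (by omega)]

theorem exists_le_abs_sub_succ_of_tendsto {b : ℕ → ℝ} {p c d : ℝ} {N : ℕ}
    (hb : Tendsto b atTop (𝓝 p)) (hsub : Icc c d ⊆ uIoo p (b N))
    (hgap : ∀ m ≥ N, b m ∉ Ioo c d) : ∃ m ≥ N, d - c ≤ |b m - b (m + 1)| := by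
  rcases lt_or_ge d c with hdc | hcd
  · exact ⟨N, le_rfl, by linarith [abs_nonneg (b N - b (N + 1))]⟩
  have hc := hsub ⟨le_rfl, hcd⟩
  have hd := hsub ⟨hcd, le_rfl⟩
  rcases le_total p (b N) with hpb | hbp
  · rw [uIoo_of_le hpb] at hc hd
    obtain ⟨n, hn⟩ :=
      ((hb.eventually (eventually_lt_nhds hc.1)).and (eventually_ge_atTop N)).exists
    obtain ⟨m, hmN, hm, hm1⟩ := Nat.exists_and_not_succ_of_le (p := fun m => d ≤ b m) hn.2
      hd.2.le (not_le.2 (hn.1.trans_le hcd))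
    have : b (m + 1) ≤ c := not_lt.1 fun h => hgap (m + 1) (by omega) ⟨h, not_le.1 hm1⟩
    exact ⟨m, hmN, by linarith [le_abs_self (b m - b (m + 1))]⟩
  · rw [uIoo_of_ge hbp] at hc hd
    obtain ⟨n, hn⟩ :=
      ((hb.eventually (eventually_gt_nhds hd.2)).and (eventually_ge_atTop N)).exists
    obtain ⟨m, hmN, hm, hm1⟩ := Nat.exists_and_not_succ_of_le (p := fun m => b m ≤ c) hn.2
      hc.1.le (not_le.2 (hcd.trans_lt hn.1))
    have : d ≤ b (m + 1) := not_lt.1 fun h => hgap (m + 1) (by omega) ⟨not_le.1 hm1, h⟩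
    exact ⟨m, hmN, by linarith [neg_abs_le (b m - b (m + 1))]⟩

def gridHoles (n : ℕ) (r : ℝ) : Set ℝ :=
  ⋃ j ∈ Finset.range (n + 1), Ioo ((j : ℝ) / n - r) (j / n + r)

theorem Ioo_subset_gridHoles {n j : ℕ} (hj : j ≤ n) (r : ℝ) :
    Ioo ((j : ℝ) / n - r) (j / n + r) ⊆ gridHoles n r :=
  subset_biUnion_of_mem (u := fun j : ℕ => Ioo ((j : ℝ) / n - r) (j / n + r))
    (Finset.mem_coe.2 (Finset.mem_range_succ_iff.2 hj))

theorem volume_gridHoles_div_le (n : ℕ) {c : ℝ} (hc : 0 ≤ c) :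
    volume (gridHoles n (c / n)) ≤ ENNReal.ofReal (4 * c) := by
  calc volume (gridHoles n (c / n))
      ≤ ∑ j ∈ Finset.range (n + 1), volume (Ioo ((j : ℝ) / n - c / n) (j / n + c / n)) :=
        measure_biUnion_finset_le _ _
    _ = ENNReal.ofReal ((n + 1) * (2 * c / n)) := by
        simp_rw [Real.volume_Ioo, add_sub_sub_cancel, ← two_mul, mul_div_assoc]
        rw [Finset.sum_const, Finset.card_range, nsmul_eq_mul, ← ENNReal.ofReal_natCast,
          ← ENNReal.ofReal_mul (by positivity)]
        push_cast
        rfl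
    _ ≤ ENNReal.ofReal (4 * c) := by
        refine ENNReal.ofReal_le_ofReal ?_
        rcases n.eq_zero_or_pos with rfl | hn
        · simp only [CharP.cast_eq_zero, div_zero, mul_zero]
          positivity
        · have hn' : (1 : ℝ) ≤ n := by exact_mod_cast hn
          rw [mul_div_assoc', div_le_iff₀ (by positivity)]
          nlinarith

theorem exists_grid_Icc_subset_uIoo {n : ℕ} {r x y : ℝ} (hn : 0 < n) (hx : x ∈ Icc 0 1)
    (hy : y ∈ Icc 0 1) (hxy : 3 / n ≤ |x - y|) (hr : r < 1 / n) :
    ∃ j ≤ n, Icc (j / n - r) (j / n + r) ⊆ uIoo x y := by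
  wlog hle : x ≤ y generalizing x y
  · rw [uIoo_comm]
    exact this hy hx (by rwa [abs_sub_comm]) (by linarith)
  rw [abs_sub_comm, abs_of_nonneg (by linarith), div_eq_mul_one_div] at hxy
  rw [uIoo_of_le hle]
  have hn' : (0 : ℝ) < n := by exact_mod_cast hn
  set j := ⌊x * n⌋₊ + 2
  have hj : (j : ℝ) / n = ⌊x * n⌋₊ / n + 2 * (1 / n) := by push_cast [j]; ring
  have hfloor : x - 1 / n < ⌊x * n⌋₊ / n ∧ ⌊x * n⌋₊ / n ≤ x := by
    rw [sub_lt_iff_lt_add, ← add_div, lt_div_iff₀ hn', div_le_iff₀ hn']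
    exact ⟨Nat.lt_floor_add_one _, Nat.floor_le (mul_nonneg hx.1 hn'.le)⟩
  refine ⟨j, ?_, fun z hz => ⟨by linarith [hz.1], by linarith [hz.2]⟩⟩
  have : (j : ℝ) / n ≤ n / n := by rw [div_self hn'.ne']; linarith [hy.2]
  exact_mod_cast (div_le_div_iff_of_pos_right hn').1 this

def holedInterval (n : ℕ → ℕ) : Set ℝ :=
  Icc 0 1 \ ⋃ i, gridHoles (n i) (2⁻¹ ^ (i + 4) / n i)

theorem isCompact_holedInterval (n : ℕ → ℕ) : IsCompact (holedInterval n) :=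
  isCompact_Icc.diff (isOpen_iUnion fun _ => isOpen_biUnion fun _ _ => isOpen_Ioo)

theorem volume_holedInterval_pos (n : ℕ → ℕ) : 0 < volume (holedInterval n) := by
  have hsum : HasSum (fun i : ℕ => (4 : ℝ) * 2⁻¹ ^ (i + 4)) (1 / 2) := by
    have h := hasSum_geometric_two.mul_left (1 / 4 : ℝ)
    rw [show (1 / 4 : ℝ) * 2 = 1 / 2 by norm_num] at h
    exact h.congr_fun fun i => by ring
  have hholes : volume (⋃ i, gridHoles (n i) (2⁻¹ ^ (i + 4) / n i)) < 1 :=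
    calc volume (⋃ i, gridHoles (n i) (2⁻¹ ^ (i + 4) / n i))
        ≤ ∑' i, ENNReal.ofReal (4 * 2⁻¹ ^ (i + 4)) :=
          (measure_iUnion_le _).trans
            (ENNReal.tsum_le_tsum fun i => volume_gridHoles_div_le _ (by positivity))
      _ = ENNReal.ofReal (1 / 2) := by
          rw [← ENNReal.ofReal_tsum_of_nonneg (fun i => by positivity) hsum.summable,
            hsum.tsum_eq]
      _ < 1 := by norm_num
  calc 0 < volume (Icc (0 : ℝ) 1) - volume (⋃ i, gridHoles (n i) (2⁻¹ ^ (i + 4) / n i)) := by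
        rw [Real.volume_Icc, sub_zero, ENNReal.ofReal_one]
        exact tsub_pos_of_lt hholes
    _ ≤ volume (holedInterval n) := le_measure_sdiff

def GridAdapted (a : ℕ → ℝ) (n : ℕ → ℕ) : Prop :=
  ∀ i, ∃ M ≥ 1, (∀ m ≥ M, (1 - 4⁻¹ ^ i) * a m < a (m + 1)) ∧ 2 ^ i < n i * a M

theorem exists_gridAdapted {a : ℕ → ℝ} (hpos : ∀ m ≥ 1, 0 < a m)
    (hratio : Tendsto (fun m => a (m + 1) / a m) atTop (𝓝 1)) : ∃ n, GridAdapted a n := by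
  suffices ∀ i : ℕ, ∃ k : ℕ, ∃ M ≥ 1,
      (∀ m ≥ M, (1 - 4⁻¹ ^ i) * a m < a (m + 1)) ∧ 2 ^ i < k * a M by
    choose n hn using this
    exact ⟨n, hn⟩
  intro i
  have hq : 1 - (4 : ℝ)⁻¹ ^ i < 1 := sub_lt_self _ (by positivity)
  obtain ⟨M, hM⟩ := ((hratio.eventually (eventually_gt_nhds hq)).and
    (eventually_ge_atTop 1)).exists_forall_of_atTop
  have haM := hpos M (hM M le_rfl).2
  obtain ⟨k, hk⟩ := exists_nat_gt (2 ^ i / a M)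
  refine ⟨k, M, (hM M le_rfl).2, fun m hm => ?_, (div_lt_iff₀ haM).1 hk⟩
  exact (lt_div_iff₀ (hpos m (hM m hm).2)).1 (hM m hm).1

theorem six_mul_sq_mul_inv_four_pow_le {L : ℝ} {i : ℕ} (hi : 48 * L ^ 2 < 2 ^ i) :
    6 * L ^ 2 * 4⁻¹ ^ i ≤ 2 * 2⁻¹ ^ (i + 4) := by
  set ρ : ℝ := 2⁻¹ ^ i
  have hρ : 0 < ρ := by positivity
  have h2 : 2 ^ i * ρ = 1 := by rw [← mul_pow]; norm_num
  have h4 : (4 : ℝ)⁻¹ ^ i = ρ * ρ := by rw [← mul_pow]; norm_num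
  calc 6 * L ^ 2 * 4⁻¹ ^ i = 6 * L ^ 2 * ρ * ρ := by rw [h4]; ring
    _ ≤ ρ / 8 := by nlinarith
    _ = 2 * 2⁻¹ ^ (i + 4) := by rw [pow_add]; ring

theorem GridAdapted.exists_index {a : ℕ → ℝ} {n : ℕ → ℕ} (hn : GridAdapted a n)
    (hpos : ∀ m ≥ 1, 0 < a m) (hdec : ∀ m ≥ 1, a (m + 1) < a m)
    (hlim : Tendsto a atTop (𝓝 0)) {L : ℝ} (hL : 1 < L) {i : ℕ} (hi : 48 * L ^ 2 < 2 ^ i) :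
    ∃ N ≥ 1, 0 < n i ∧ 3 / n i ≤ L⁻¹ * a N ∧
      ∀ m ≥ N, L * |a m - a (m + 1)| < 2 * (2⁻¹ ^ (i + 4) / n i) := by
  have hL0 : 0 < L := zero_lt_one.trans hL
  obtain ⟨M, hM, hratio, hscale⟩ := hn i
  set q : ℝ := 4⁻¹ ^ i
  have hq : 0 < q ∧ q ≤ 4⁻¹ := by
    refine ⟨by positivity, pow_le_of_le_one (by norm_num) (by norm_num) ?_⟩
    rintro rfl
    nlinarith
  have hni : (0 : ℝ) < n i := pos_of_mul_pos_left ((pow_pos two_pos i).trans hscale) (hpos M hM).le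
  obtain ⟨N, hNM, htN, hNt⟩ := exists_mem_Ico_of_le_two_mul_succ hlim (t := 3 * L / n i)
    (by positivity) ((div_le_iff₀ hni).2 (by nlinarith))
    fun m hm => by nlinarith [hratio m hm, hpos m (by omega)]
  refine ⟨N, by omega, by exact_mod_cast hni, ?_, fun m hm => ?_⟩
  · calc 3 / n i = L⁻¹ * (3 * L / n i) := by field_simp
      _ ≤ L⁻¹ * a N := by gcongr
  · calc L * |a m - a (m + 1)| < L * (q * a N) := by
          gcongr
          exact abs_sub_succ_lt_of_ratio hdec hq.1.le hM hratio hNM hm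
      _ ≤ L * (q * (2 * (3 * L / n i))) := by gcongr
      _ = 6 * L ^ 2 * q / n i := by ring
      _ ≤ 2 * (2⁻¹ ^ (i + 4) / n i) := by
          rw [mul_div_assoc']
          exact div_le_div_of_nonneg_right (six_mul_sq_mul_inv_four_pow_le hi) hni.le

theorem GridAdapted.not_forall_mem_holedInterval {a : ℕ → ℝ} {n : ℕ → ℕ} (hn : GridAdapted a n)
    (hpos : ∀ m ≥ 1, 0 < a m) (hdec : ∀ m ≥ 1, a (m + 1) < a m)
    (hlim : Tendsto a atTop (𝓝 0)) {f : ℝ → ℝ} {L : ℝ} (hL : 1 < L)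
    (hf : ∀ x y, L⁻¹ * |x - y| ≤ |f x - f y| ∧ |f x - f y| ≤ L * |x - y|) :
    ¬ ∀ m ≥ 1, f (a m) ∈ holedInterval n := by
  intro hfa
  have hfb : Tendsto (f ∘ a) atTop (𝓝 (f 0)) :=
    ((LipschitzWith.of_dist_le' fun x y => (hf x y).2).continuous.tendsto 0).comp hlim
  have hf0 : f 0 ∈ Icc 0 1 :=
    isClosed_Icc.mem_of_tendsto hfb (eventually_atTop.2 ⟨1, fun m hm => (hfa m hm).1⟩)
  obtain ⟨i, hi⟩ := pow_unbounded_of_one_lt (48 * L ^ 2) one_lt_two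
  obtain ⟨N, hN, hni, hfar, hsteps⟩ := hn.exists_index hpos hdec hlim hL hi
  set r : ℝ := 2⁻¹ ^ (i + 4) / n i
  have hfar' : 3 / n i ≤ |f 0 - f (a N)| := by
    have hlow := (hf (a N) 0).1
    rw [sub_zero, abs_of_pos (hpos N hN), abs_sub_comm] at hlow
    exact hfar.trans hlow
  have hr : r < 1 / n i := div_lt_div_of_pos_right
    (pow_lt_one₀ (by norm_num) (by norm_num) (by omega)) (by exact_mod_cast hni)
  obtain ⟨j, hj, hsub⟩ := exists_grid_Icc_subset_uIoo hni hf0 (hfa N hN).1 hfar' hr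
  obtain ⟨m, hmN, hjump⟩ := exists_le_abs_sub_succ_of_tendsto hfb hsub
    fun m hm hmem => (hfa m (by omega)).2 (mem_iUnion.2 ⟨i, Ioo_subset_gridHoles hj r hmem⟩)
  have hstep := ((hf (a m) (a (m + 1))).2).trans_lt (hsteps m hmN)
  simp only [Function.comp] at hjump
  linarith
end

theorem stmt7 (a : ℕ → ℝ) (hpos : ∀ n ≥ 1, 0 < a n)
    (hdec : ∀ n ≥ 1, a (n + 1) < a n)
    (hlim : Tendsto a atTop (nhds 0))
    (hratio : Tendsto (fun n => a (n + 1) / a n) atTop (nhds 1)) :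
    ∃ E : Set ℝ, IsCompact E ∧ 0 < volume E ∧
      ¬ ∃ f : ℝ → ℝ, (∃ L : ℝ, 1 < L ∧ ∀ x y : ℝ,
          L⁻¹ * |x - y| ≤ |f x - f y| ∧ |f x - f y| ≤ L * |x - y|) ∧
        ∀ n ≥ 1, f (a n) ∈ E := by
  obtain ⟨n, hn⟩ := exists_gridAdapted hpos hratio
  refine ⟨holedInterval n, isCompact_holedInterval n, volume_holedInterval_pos n, ?_⟩
  rintro ⟨f, ⟨L, hL, hf⟩, hfa⟩
  exact hn.not_forall_mem_holedInterval hpos hdec hlim hL hf hfa
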